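/- There exists a strictly increasing sequence (n_k)_{k≥0} of positive integers with n_{k+1}/n_k → 1 as k → ∞ which is a rigidity sequence: there exists a continuous (atomless) Borel probability measure σ on 𝕋 such that ∫_𝕋 z^{n_k} dσ(z) → 1 as k → ∞. -/

import Mathlib

open MeasureTheory Filter Topology

/-!
Let `c m = 2 ^ ((m + 1) ^ 2)` and let `σ` be the law of `exp (2πi ∑ ε_m / c m)`, where the digits
`ε_m ∈ {0, 1}` are independent with `P(ε_m = 1) = 1 / (m + 2)`. The sequence `(n_k)` runs, in its
`m`-th block, through the multiples of `c m` between `(m + 1) c m` and `(m + 2) c (m + 1)`; its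
steps `c m` are at most `n_k / (m + 1)`, so `n_{k+1} / n_k → 1`.

For `n` in block `m`, the digits `ε_l` with `l ≤ m` contribute integers to `n ∑ ε_l / c l`, and the
tail from `l = m + 2` on contributes at most `3 n / (2 c (m + 2)) ≤ 3 / (2 (m + 2))`. So
`z ^ n` is close to `1` unless `ε_{m+1} = 1`, an event of probability `1 / (m + 3)`, and the Fourier
coefficients tend to `1`. The measure `σ` has no atoms because the digit sum is injective (the
weights decrease faster than geometrically with ratio `1 / 3`) and every single digit sequence has
probability `∏ (1 - 1 / (m + 2)) = 0`.
-/

open scoped FourierTransform ProbabilityTheory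
open Real ProbabilityTheory

section DigitSum

variable {a : ℕ → ℝ}

lemma le_pow_mul_of_three_mul_succ_le (h3 : ∀ m, 3 * a (m + 1) ≤ a m) (n : ℕ) :
    a n ≤ (1 / 3) ^ n * a 0 :=
  le_geom (by norm_num) n fun k _ => by linarith [h3 k]

lemma summable_of_three_mul_succ_le (h0 : ∀ m, 0 ≤ a m) (h3 : ∀ m, 3 * a (m + 1) ≤ a m) :
    Summable a :=
  .of_nonneg_of_le h0 (le_pow_mul_of_three_mul_succ_le h3)
    ((summable_geometric_of_lt_one (by norm_num) (by norm_num)).mul_right _)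

lemma tsum_le_of_three_mul_succ_le (h0 : ∀ m, 0 ≤ a m) (h3 : ∀ m, 3 * a (m + 1) ≤ a m) :
    ∑' m, a m ≤ 3 / 2 * a 0 := by
  have hgeom := summable_geometric_of_lt_one (r := (1 / 3 : ℝ)) (by norm_num) (by norm_num)
  calc ∑' m, a m ≤ ∑' m, (1 / 3 : ℝ) ^ m * a 0 :=
        (summable_of_three_mul_succ_le h0 h3).tsum_le_tsum
          (le_pow_mul_of_three_mul_succ_le h3) (hgeom.mul_right _)
    _ = 3 / 2 * a 0 := by
        rw [tsum_mul_right, tsum_geometric_of_lt_one (by norm_num) (by norm_num)]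
        norm_num

noncomputable def digitSum (a : ℕ → ℝ) (ε : ℕ → Bool) : ℝ := ∑' m, if ε m then a m else 0

lemma digit_le (h0 : ∀ m, 0 ≤ a m) (ε : ℕ → Bool) (m : ℕ) : (if ε m then a m else 0) ≤ a m := by
  split <;> simp [h0 m]

lemma digit_nonneg (h0 : ∀ m, 0 ≤ a m) (ε : ℕ → Bool) (m : ℕ) : 0 ≤ if ε m then a m else 0 := by
  split <;> simp [h0 m]

lemma digitSum_nonneg (h0 : ∀ m, 0 ≤ a m) (ε : ℕ → Bool) : 0 ≤ digitSum a ε :=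
  tsum_nonneg (digit_nonneg h0 ε)

lemma summable_digit (h0 : ∀ m, 0 ≤ a m) (h3 : ∀ m, 3 * a (m + 1) ≤ a m) (ε : ℕ → Bool) :
    Summable fun m => if ε m then a m else 0 :=
  .of_nonneg_of_le (digit_nonneg h0 ε) (digit_le h0 ε) (summable_of_three_mul_succ_le h0 h3)

lemma digitSum_le (h0 : ∀ m, 0 ≤ a m) (h3 : ∀ m, 3 * a (m + 1) ≤ a m) (ε : ℕ → Bool) :
    digitSum a ε ≤ 3 / 2 * a 0 :=
  ((summable_digit h0 h3 ε).tsum_le_tsum (digit_le h0 ε)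
    (summable_of_three_mul_succ_le h0 h3)).trans (tsum_le_of_three_mul_succ_le h0 h3)

lemma digitSum_eq_sum_add_digitSum_shift (h0 : ∀ m, 0 ≤ a m) (h3 : ∀ m, 3 * a (m + 1) ≤ a m)
    (ε : ℕ → Bool) (N : ℕ) :
    digitSum a ε = ∑ m ∈ Finset.range N, (if ε m then a m else 0) +
      digitSum (fun m => a (m + N)) (fun m => ε (m + N)) :=
  ((summable_digit h0 h3 ε).sum_add_tsum_nat_add N).symm

lemma digitSum_shift_le (h0 : ∀ m, 0 ≤ a m) (h3 : ∀ m, 3 * a (m + 1) ≤ a m)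
    (ε : ℕ → Bool) (N : ℕ) :
    digitSum (fun m => a (m + N)) (fun m => ε (m + N)) ≤ 3 / 2 * a N := by
  simpa using digitSum_le (a := fun m => a (m + N)) (fun m => h0 _)
    (fun m => by simpa only [add_right_comm] using h3 (m + N)) (fun m => ε (m + N))

lemma digitSum_lt_digitSum (hpos : ∀ m, 0 < a m) (h3 : ∀ m, 3 * a (m + 1) ≤ a m)
    {ε ε' : ℕ → Bool} {m : ℕ} (heq : ∀ l < m, ε l = ε' l) (hε : ε m = false)
    (hε' : ε' m = true) : digitSum a ε < digitSum a ε' := by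
  have h0 : ∀ m, 0 ≤ a m := fun m => (hpos m).le
  have hhead : ∑ l ∈ Finset.range m, (if ε l then a l else 0) =
      ∑ l ∈ Finset.range m, (if ε' l then a l else 0) :=
    Finset.sum_congr rfl fun l hl => by rw [heq l (Finset.mem_range.1 hl)]
  rw [digitSum_eq_sum_add_digitSum_shift h0 h3 ε (m + 1),
    digitSum_eq_sum_add_digitSum_shift h0 h3 ε' (m + 1),
    Finset.sum_range_succ, Finset.sum_range_succ, hhead, hε, hε']
  simp only [Bool.false_eq_true, if_false, if_true, add_zero]
  have := digitSum_shift_le h0 h3 ε (m + 1)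
  have := digitSum_nonneg (fun l => h0 (l + (m + 1))) (fun l => ε' (l + (m + 1)))
  linarith [h3 m, hpos m]

lemma digitSum_injective (hpos : ∀ m, 0 < a m) (h3 : ∀ m, 3 * a (m + 1) ≤ a m) :
    Function.Injective (digitSum a) := by
  intro ε ε' h
  by_contra hne
  have hex : ∃ m, ε m ≠ ε' m := Function.ne_iff.mp hne
  have heq : ∀ l < Nat.find hex, ε l = ε' l := fun l hl => not_not.mp (Nat.find_min hex hl)
  cases hε : ε (Nat.find hex) <;> cases hε' : ε' (Nat.find hex)
  · exact Nat.find_spec hex (hε.trans hε'.symm)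
  · exact (digitSum_lt_digitSum hpos h3 heq hε hε').ne h
  · exact (digitSum_lt_digitSum hpos h3 (fun l hl => (heq l hl).symm) hε' hε).ne' h
  · exact Nat.find_spec hex (hε.trans hε'.symm)

lemma continuous_digitSum (h0 : ∀ m, 0 ≤ a m) (hs : Summable a) : Continuous (digitSum a) :=
  continuous_tsum (fun m => (continuous_of_discreteTopology (f := fun b : Bool =>
    if b then a m else 0)).comp (continuous_apply m)) hs
    fun m ε => by rw [Real.norm_of_nonneg (digit_nonneg h0 ε m)]; exact digit_le h0 ε m

end DigitSum

lemma fourierChar_add_intCast (x : ℝ) (k : ℤ) : 𝐞 (x + k) = 𝐞 x := by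
  rw [AddChar.map_add_eq_mul, fourierChar_apply' (k : ℝ), Circle.exp_two_pi_mul_int, mul_one]

lemma norm_fourierChar_sub_one_le (x : ℝ) : ‖(𝐞 x : ℂ) - 1‖ ≤ 2 * π * |x| := by
  have h := Real.norm_exp_I_mul_ofReal_sub_one_le (x := 2 * π * x)
  rwa [Real.norm_eq_abs, abs_mul, abs_of_pos Real.two_pi_pos, mul_comm Complex.I] at h

lemma fourierChar_injOn_Ico : Set.InjOn 𝐞 (Set.Ico 0 1) := by
  intro x hx y hy h
  have hmem : ∀ t ∈ Set.Ico (0 : ℝ) 1, 2 * π * t ∈ Set.Ico 0 (2 * π) := fun t ht =>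
    ⟨by nlinarith [ht.1, Real.pi_pos], by nlinarith [ht.2, Real.pi_pos]⟩
  exact mul_left_cancel₀ Real.two_pi_pos.ne'
    (Circle.exp_injOn_Ico (by simp) (hmem x hx) (hmem y hy) h)

lemma nullSingletonClass_infinitePi {X : ℕ → Type*} [∀ i, MeasurableSpace (X i)]
    [∀ i, MeasurableSingletonClass (X i)] (μ : ∀ i, Measure (X i))
    [∀ i, IsProbabilityMeasure (μ i)] (b : ℕ → ENNReal) (hb : ∀ i x, μ i {x} ≤ b i)
    (hprod : Tendsto (fun N => ∏ i ∈ Finset.range N, b i) atTop (𝓝 0)) :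
    NullSingletonClass (Measure.infinitePi μ) := by
  refine ⟨fun x => le_antisymm (ge_of_tendsto' hprod fun N => ?_) zero_le⟩
  rw [Measure.infinitePi_singleton, ENNReal.tprod_eq_iInf_prod fun i => prob_le_one]
  exact (iInf_le _ (Finset.range N)).trans (Finset.prod_le_prod' fun i _ => hb i (x i))

lemma nullSingletonClass_map {α β : Type*} [MeasurableSpace α] [MeasurableSpace β]
    [MeasurableSingletonClass β] {μ : Measure α} [NullSingletonClass μ] {f : α → β}
    (hf : Measurable f) (hinj : Function.Injective f) : NullSingletonClass (μ.map f) :=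
  ⟨fun y => by
    rw [Measure.map_apply hf (measurableSet_singleton y)]
    exact (Set.subsingleton_singleton.preimage hinj).measure_zero μ⟩

lemma bernoulliMeasure_singleton_le {p : unitInterval} (hp : (p : ℝ) ≤ 1 / 2) (b : Bool) :
    Ber(true, false, p) {b} ≤ ENNReal.ofReal (1 - p) := by
  rw [← ofReal_measureReal]
  refine ENNReal.ofReal_le_ofReal ?_
  cases b
  · simp
  · rw [bernoulliMeasure_real_apply_of_mem_of_notMem _ (measurableSet_singleton _) rfl
      (by simp)]
    linarith

lemma prod_one_sub_inv_add_two (N : ℕ) :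
    ∏ i ∈ Finset.range N, (1 - ((i : ℝ) + 2)⁻¹) = ((N : ℝ) + 1)⁻¹ := by
  induction N with
  | zero => simp
  | succ N ih =>
    rw [Finset.prod_range_succ, ih]
    push_cast
    field_simp
    ring

section BlockSequence

variable (c : ℕ → ℕ)

/-- Pairs `(m, n)`: in block `m = 0, 1, 2, …`, `n` runs through the multiples of `c m` from
`(m + 1) * c m` up to `(m + 2) * c (m + 1)`. -/
def blockSeq : ℕ → ℕ × ℕ
  | 0 => (0, c 0)
  | k + 1 =>
    let (m, n) := blockSeq k
    (if n + c m < (m + 2) * c (m + 1) then m else m + 1, n + c m)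

def IsInBlock (m n : ℕ) : Prop := c m ∣ n ∧ (m + 1) * c m ≤ n ∧ n < (m + 2) * c (m + 1)

variable {c}

lemma blockSeq_succ_snd (k : ℕ) :
    (blockSeq c (k + 1)).2 = (blockSeq c k).2 + c (blockSeq c k).1 := rfl

lemma monotone_of_dvd_succ (hpos : ∀ m, 0 < c m) (hdvd : ∀ m, c m ∣ c (m + 1)) :
    Monotone c :=
  monotone_nat_of_le_succ fun m => Nat.le_of_dvd (hpos _) (hdvd m)

lemma dvd_of_le_of_dvd_succ (hdvd : ∀ m, c m ∣ c (m + 1)) {l m : ℕ} (h : l ≤ m) : c l ∣ c m := by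
  induction m, h using Nat.le_induction with
  | base => exact dvd_rfl
  | succ m _ ih => exact ih.trans (hdvd m)

lemma IsInBlock.step (hpos : ∀ m, 0 < c m) (hdvd : ∀ m, c m ∣ c (m + 1)) {m n : ℕ}
    (h : IsInBlock c m n) :
    IsInBlock c (if n + c m < (m + 2) * c (m + 1) then m else m + 1) (n + c m) := by
  obtain ⟨hn, hlow, hup⟩ := h
  split_ifs with hlt
  · exact ⟨Nat.dvd_add_self_right.2 hn, by nlinarith, hlt⟩
  · -- both ends are multiples of `c m`, so the last step lands exactly on `(m + 2) * c (m + 1)`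
    have hend : n + c m = (m + 2) * c (m + 1) := by
      obtain ⟨q, rfl⟩ := hn
      obtain ⟨r, hr⟩ := (hdvd m).mul_left (m + 2)
      rw [hr] at hup hlt ⊢
      have : q < r := lt_of_mul_lt_mul_left hup (Nat.zero_le _)
      have : c m * q + c m = c m * (q + 1) := by ring
      nlinarith
    have hmono := monotone_of_dvd_succ hpos hdvd (Nat.le_succ (m + 1))
    refine ⟨hend ▸ dvd_mul_left _ _, hend.ge, ?_⟩
    rw [hend]
    nlinarith [hpos (m + 1)]

lemma isInBlock_blockSeq (hpos : ∀ m, 0 < c m) (hdvd : ∀ m, c m ∣ c (m + 1)) (k : ℕ) :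
    IsInBlock c (blockSeq c k).1 (blockSeq c k).2 := by
  induction k with
  | zero =>
    exact ⟨dvd_rfl, by simp [blockSeq], by
      simp only [blockSeq]
      nlinarith [monotone_of_dvd_succ hpos hdvd (Nat.zero_le 1), hpos 0]⟩
  | succ k ih => exact ih.step hpos hdvd

lemma blockSeq_snd_pos (hpos : ∀ m, 0 < c m) (hdvd : ∀ m, c m ∣ c (m + 1)) (k : ℕ) :
    0 < (blockSeq c k).2 :=
  (Nat.mul_pos (Nat.succ_pos _) (hpos _)).trans_le (isInBlock_blockSeq hpos hdvd k).2.1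

lemma strictMono_blockSeq_snd (hpos : ∀ m, 0 < c m) : StrictMono fun k => (blockSeq c k).2 :=
  strictMono_nat_of_lt_succ fun k => by
    rw [blockSeq_succ_snd]
    exact Nat.lt_add_of_pos_right (hpos _)

lemma tendsto_blockSeq_fst (hpos : ∀ m, 0 < c m) (hdvd : ∀ m, c m ∣ c (m + 1)) :
    Tendsto (fun k => (blockSeq c k).1) atTop atTop := by
  refine tendsto_atTop.2 fun M => eventually_atTop.2 ⟨(M + 2) * c (M + 1), fun k hk => ?_⟩
  by_contra! hlt
  have hmono := monotone_of_dvd_succ hpos hdvd (Nat.succ_le_succ hlt.le)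
  have := (isInBlock_blockSeq hpos hdvd k).2.2
  have := (strictMono_blockSeq_snd hpos).le_apply (x := k)
  nlinarith

lemma blockSeq_succ_snd_div_le (hpos : ∀ m, 0 < c m) (hdvd : ∀ m, c m ∣ c (m + 1)) (k : ℕ) :
    ((blockSeq c (k + 1)).2 : ℝ) / (blockSeq c k).2 ≤ 1 + 1 / ((blockSeq c k).1 + 1) := by
  obtain ⟨-, hlow, -⟩ := isInBlock_blockSeq hpos hdvd k
  set m := (blockSeq c k).1
  set n := (blockSeq c k).2
  have hlow' : ((m : ℝ) + 1) * c m ≤ n := by exact_mod_cast hlow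
  have hn : (0 : ℝ) < n := by exact_mod_cast blockSeq_snd_pos hpos hdvd k
  rw [blockSeq_succ_snd, Nat.cast_add, div_le_iff₀ hn, one_add_mul, add_le_add_iff_left,
    one_div_mul_eq_div, le_div_iff₀ (by positivity)]
  linarith

lemma tendsto_blockSeq_snd_succ_div (hpos : ∀ m, 0 < c m) (hdvd : ∀ m, c m ∣ c (m + 1)) :
    Tendsto (fun k => ((blockSeq c (k + 1)).2 : ℝ) / (blockSeq c k).2) atTop (𝓝 1) := by
  have hupper : Tendsto (fun k => 1 + 1 / (((blockSeq c k).1 : ℝ) + 1)) atTop (𝓝 1) := by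
    simpa using (tendsto_one_div_add_atTop_nhds_zero_nat.comp
      (tendsto_blockSeq_fst hpos hdvd)).const_add (1 : ℝ)
  refine tendsto_of_tendsto_of_tendsto_of_le_of_le tendsto_const_nhds hupper (fun k => ?_)
    (blockSeq_succ_snd_div_le hpos hdvd)
  rw [one_le_div (Nat.cast_pos.2 (blockSeq_snd_pos hpos hdvd k))]
  exact Nat.cast_le.2 ((strictMono_blockSeq_snd hpos).monotone (Nat.le_succ k))

end BlockSequence

section FourierCoefficients

variable {c : ℕ → ℕ}

noncomputable def digitMeasure (p : ℕ → unitInterval) : Measure (ℕ → Bool) :=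
  Measure.infinitePi fun m => Ber(true, false, p m)

instance (p : ℕ → unitInterval) : IsProbabilityMeasure (digitMeasure p) :=
  inferInstanceAs (IsProbabilityMeasure (Measure.infinitePi _))

lemma digitMeasure_real_digit_eq_true (p : ℕ → unitInterval) (m : ℕ) :
    (digitMeasure p).real {ε | ε m = true} = p m :=
  ((measurePreserving_eval_infinitePi (fun m => Ber(true, false, p m)) m).measureReal_preimage
    (measurableSet_singleton true).nullMeasurableSet).trans (by simp)

noncomputable def circlePoint (c : ℕ → ℕ) (ε : ℕ → Bool) : ℂ :=
  𝐞 (digitSum (fun m => (c m : ℝ)⁻¹) ε)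

lemma norm_circlePoint (ε : ℕ → Bool) : ‖circlePoint c ε‖ = 1 := Circle.norm_coe _

lemma circlePoint_pow (ε : ℕ → Bool) (n : ℕ) :
    circlePoint c ε ^ n = 𝐞 (n * digitSum (fun m => (c m : ℝ)⁻¹) ε) := by
  rw [circlePoint, ← Circle.coe_pow, ← AddChar.map_nsmul_eq_pow, nsmul_eq_mul]

lemma three_mul_inv_cast_succ_le (hpos : ∀ m, 0 < c m) (h3 : ∀ m, 3 * c m ≤ c (m + 1))
    (m : ℕ) : 3 * ((c (m + 1) : ℝ))⁻¹ ≤ (c m : ℝ)⁻¹ := by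
  rw [← div_eq_mul_inv, div_le_iff₀ (Nat.cast_pos.2 (hpos _)), inv_mul_eq_div,
    le_div_iff₀ (Nat.cast_pos.2 (hpos m))]
  exact_mod_cast h3 m

lemma continuous_circlePoint (hpos : ∀ m, 0 < c m) (h3 : ∀ m, 3 * c m ≤ c (m + 1)) :
    Continuous (circlePoint c) := by
  have h0 : ∀ m, 0 ≤ ((c m : ℝ))⁻¹ := fun m => by positivity
  exact continuous_subtype_val.comp <| continuous_fourierChar.comp <| continuous_digitSum h0
    (summable_of_three_mul_succ_le h0 (three_mul_inv_cast_succ_le hpos h3))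

lemma circlePoint_injective (hpos : ∀ m, 0 < c m) (h3 : ∀ m, 3 * c m ≤ c (m + 1))
    (h2 : 2 ≤ c 0) : Function.Injective (circlePoint c) := by
  have h0 : ∀ m, 0 ≤ ((c m : ℝ))⁻¹ := fun m => by positivity
  have h3' := three_mul_inv_cast_succ_le hpos h3
  have hmem : ∀ ε, digitSum (fun m => (c m : ℝ)⁻¹) ε ∈ Set.Ico 0 1 := fun ε => by
    have hc0 : ((c 0 : ℝ))⁻¹ ≤ 1 / 2 := by
      rw [one_div]; exact inv_anti₀ two_pos (by exact_mod_cast h2)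
    exact ⟨digitSum_nonneg h0 ε, by linarith [digitSum_le h0 h3' ε]⟩
  exact fun ε ε' h => digitSum_injective (fun m => inv_pos.2 (Nat.cast_pos.2 (hpos m))) h3'
    (fourierChar_injOn_Ico (hmem ε) (hmem ε') (Circle.coe_injective h))

lemma exists_intCast_eq_mul_sum (hpos : ∀ m, 0 < c m) {ε : ℕ → Bool} {N n : ℕ}
    (hdvd : ∀ l < N, ε l = true → c l ∣ n) :
    ∃ k : ℤ, (n : ℝ) * ∑ l ∈ Finset.range N, (if ε l then (c l : ℝ)⁻¹ else 0) = k := by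
  refine ⟨∑ l ∈ Finset.range N, if ε l then ((n / c l : ℕ) : ℤ) else 0, ?_⟩
  rw [Finset.mul_sum, Int.cast_sum]
  refine Finset.sum_congr rfl fun l hl => ?_
  split_ifs with h
  · rw [Int.cast_natCast, Nat.cast_div (hdvd l (Finset.mem_range.1 hl) h)
      (Nat.cast_ne_zero.2 (hpos l).ne'), div_eq_mul_inv]
  · rw [mul_zero, Int.cast_zero]

lemma norm_circlePoint_pow_sub_one_le (hpos : ∀ m, 0 < c m)
    (h3 : ∀ m, 3 * c m ≤ c (m + 1)) {ε : ℕ → Bool} {N n : ℕ}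
    (hdvd : ∀ l < N, ε l = true → c l ∣ n) :
    ‖circlePoint c ε ^ n - 1‖ ≤ 3 * π * n / c N := by
  obtain ⟨k, hk⟩ := exists_intCast_eq_mul_sum hpos hdvd
  have h0 : ∀ m, 0 ≤ ((c m : ℝ))⁻¹ := fun m => by positivity
  have h3' := three_mul_inv_cast_succ_le hpos h3
  set tail := digitSum (fun m => (c (m + N) : ℝ)⁻¹) (fun m => ε (m + N))
  have htail : tail ≤ 3 / 2 * (c N : ℝ)⁻¹ := digitSum_shift_le h0 h3' ε N
  have htail0 : 0 ≤ tail := digitSum_nonneg (fun m => h0 _) _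
  rw [circlePoint_pow, digitSum_eq_sum_add_digitSum_shift h0 h3' ε N, mul_add, hk, add_comm,
    fourierChar_add_intCast]
  calc ‖(𝐞 (n * tail) : ℂ) - 1‖ ≤ 2 * π * |n * tail| := norm_fourierChar_sub_one_le _
    _ ≤ 2 * π * (n * (3 / 2 * (c N : ℝ)⁻¹)) := by
        rw [abs_of_nonneg (by positivity)]
        gcongr
    _ = 3 * π * n / c N := by ring

/-- Off the event `ε (m + 1) = true`, the bound of `norm_circlePoint_pow_sub_one_le` applies
with `N = m + 2`. -/
lemma norm_integral_circlePoint_pow_sub_one_le (hpos : ∀ m, 0 < c m)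
    (h3 : ∀ m, 3 * c m ≤ c (m + 1)) (p : ℕ → unitInterval) {m n : ℕ} (hdvd : ∀ l ≤ m, c l ∣ n) :
    ‖∫ ε, circlePoint c ε ^ n ∂digitMeasure p - 1‖ ≤ 2 * p (m + 1) + 3 * π * n / c (m + 2) := by
  set A := {ε : ℕ → Bool | ε (m + 1) = true}
  set δ := 3 * π * n / c (m + 2)
  have hA : MeasurableSet A := measurableSet_eq_fun (measurable_pi_apply _) measurable_const
  have hint : Integrable (fun ε => circlePoint c ε ^ n) (digitMeasure p) :=
    .of_bound ((continuous_circlePoint hpos h3).pow n).aestronglyMeasurable 1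
      (ae_of_all _ fun ε => by rw [norm_pow, norm_circlePoint, one_pow])
  have hbound : ∀ ε, ‖circlePoint c ε ^ n - 1‖ ≤ A.indicator (fun _ => 2) ε + δ := by
    intro ε
    by_cases hε : ε (m + 1) = true
    · rw [Set.indicator_of_mem (show ε ∈ A from hε)]
      calc ‖circlePoint c ε ^ n - 1‖ ≤ ‖circlePoint c ε ^ n‖ + ‖(1 : ℂ)‖ := norm_sub_le _ _
        _ = 2 := by rw [norm_pow, norm_circlePoint, one_pow, norm_one, one_add_one_eq_two]
        _ ≤ 2 + δ := le_add_of_nonneg_right (by positivity)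
    · rw [Set.indicator_of_notMem (show ε ∉ A from hε), zero_add]
      refine norm_circlePoint_pow_sub_one_le hpos h3 fun l hl hεl => hdvd l ?_
      have : l ≠ m + 1 := by rintro rfl; exact hε hεl
      omega
  calc ‖∫ ε, circlePoint c ε ^ n ∂digitMeasure p - 1‖
      = ‖∫ ε, (circlePoint c ε ^ n - 1) ∂digitMeasure p‖ := by
        rw [integral_sub hint (integrable_const _), integral_const, probReal_univ, one_smul]
    _ ≤ ∫ ε, (A.indicator (fun _ => 2) ε + δ) ∂digitMeasure p :=
        norm_integral_le_of_norm_le (((integrable_const 2).indicator hA).add (integrable_const δ))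
          (ae_of_all _ hbound)
    _ = 2 * p (m + 1) + δ := by
        rw [integral_add ((integrable_const 2).indicator hA) (integrable_const δ),
          integral_indicator_const _ hA, integral_const, probReal_univ, one_smul, smul_eq_mul,
          digitMeasure_real_digit_eq_true, mul_comm]

end FourierCoefficients

def blockModulus (m : ℕ) : ℕ := 2 ^ ((m + 1) ^ 2)

lemma blockModulus_pos (m : ℕ) : 0 < blockModulus m := Nat.two_pow_pos _

lemma blockModulus_succ (m : ℕ) : blockModulus (m + 1) = blockModulus m * 2 ^ (2 * m + 3) := by
  rw [blockModulus, blockModulus, ← pow_add]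
  ring_nf

lemma blockModulus_dvd_succ (m : ℕ) : blockModulus m ∣ blockModulus (m + 1) :=
  blockModulus_succ m ▸ dvd_mul_right _ _

lemma three_mul_blockModulus_le_succ (m : ℕ) : 3 * blockModulus m ≤ blockModulus (m + 1) := by
  rw [blockModulus_succ, mul_comm]
  gcongr
  calc 3 ≤ 2 ^ 3 := by norm_num
    _ ≤ 2 ^ (2 * m + 3) := Nat.pow_le_pow_right two_pos (by omega)

lemma sq_mul_blockModulus_le (m : ℕ) :
    (m + 2) ^ 2 * blockModulus (m + 1) ≤ blockModulus (m + 2) := by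
  rw [blockModulus_succ (m + 1), mul_comm ((m + 2) ^ 2)]
  refine Nat.mul_le_mul_left _ ?_
  calc (m + 2) ^ 2 ≤ (2 ^ (m + 2)) ^ 2 := Nat.pow_le_pow_left (Nat.lt_two_pow_self).le 2
    _ = 2 ^ (2 * (m + 1) + 2) := by rw [← pow_mul]; congr 1; ring
    _ ≤ 2 ^ (2 * (m + 1) + 3) := Nat.pow_le_pow_right two_pos (by omega)

noncomputable def digitProb (m : ℕ) : unitInterval :=
  ⟨((m : ℝ) + 2)⁻¹, by positivity, inv_le_one_of_one_le₀ (by linarith [m.cast_nonneg (α := ℝ)])⟩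

lemma digitProb_le_half (m : ℕ) : (digitProb m : ℝ) ≤ 1 / 2 := by
  rw [one_div]
  exact inv_anti₀ two_pos (by linarith [m.cast_nonneg (α := ℝ)])

lemma nullSingletonClass_digitMeasure_digitProb : NullSingletonClass (digitMeasure digitProb) := by
  refine nullSingletonClass_infinitePi _ (fun i => ENNReal.ofReal (1 - ((i : ℝ) + 2)⁻¹))
    (fun i => bernoulliMeasure_singleton_le (digitProb_le_half i)) ?_
  have hprod : ∀ N, ∏ i ∈ Finset.range N, ENNReal.ofReal (1 - ((i : ℝ) + 2)⁻¹) =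
      ENNReal.ofReal ((N : ℝ) + 1)⁻¹ := fun N => by
    rw [← ENNReal.ofReal_prod_of_nonneg (f := fun i : ℕ => 1 - ((i : ℝ) + 2)⁻¹)
      fun i _ => sub_nonneg.2 (digitProb i).2.2,
      prod_one_sub_inv_add_two]
  simp_rw [hprod]
  simpa using ENNReal.tendsto_ofReal (tendsto_one_div_add_atTop_nhds_zero_nat)

lemma norm_integral_circlePoint_pow_blockSeq_sub_one_le (k : ℕ) :
    ‖∫ ε, circlePoint blockModulus ε ^ (blockSeq blockModulus k).2 ∂digitMeasure digitProb - 1‖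
      ≤ (2 + 3 * π) / ((blockSeq blockModulus k).1 + 2) := by
  obtain ⟨hdvd, -, hup⟩ := isInBlock_blockSeq blockModulus_pos blockModulus_dvd_succ k
  set m := (blockSeq blockModulus k).1
  set n := (blockSeq blockModulus k).2
  refine (norm_integral_circlePoint_pow_sub_one_le blockModulus_pos three_mul_blockModulus_le_succ
    digitProb fun l hl => (dvd_of_le_of_dvd_succ blockModulus_dvd_succ hl).trans hdvd).trans ?_
  have hp : (digitProb (m + 1) : ℝ) ≤ 1 / (m + 2) := by
    rw [one_div]
    exact inv_anti₀ (by positivity) (by push_cast; linarith)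
  have hn : (n : ℝ) / blockModulus (m + 2) ≤ 1 / (m + 2) := by
    have : n * (m + 2) ≤ blockModulus (m + 2) := by nlinarith [sq_mul_blockModulus_le m]
    rw [div_le_div_iff₀ (Nat.cast_pos.2 (blockModulus_pos _)) (by positivity), one_mul]
    exact_mod_cast this
  calc 2 * (digitProb (m + 1) : ℝ) + 3 * π * n / blockModulus (m + 2)
      = 2 * (digitProb (m + 1) : ℝ) + 3 * π * (n / blockModulus (m + 2)) := by ring
    _ ≤ 2 * (1 / (m + 2)) + 3 * π * (1 / (m + 2)) := by gcongr
    _ = (2 + 3 * π) / (m + 2) := by ring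

/-- Example 3.13: there exists a strictly increasing sequence `(n_k)` of positive integers
with `n_{k+1}/n_k → 1` which is a rigidity sequence: there is a continuous (atomless)
probability measure `σ` on the unit circle such that `∫ z^{n_k} dσ(z) → 1`. -/
theorem exists_rigidity_sequence_with_ratio_tendsto_one :
    ∃ n : ℕ → ℕ, StrictMono n ∧ (∀ k, 0 < n k) ∧
      Tendsto (fun k => (n (k + 1) : ℝ) / (n k : ℝ)) atTop (𝓝 1) ∧
      ∃ σ : Measure ℂ, IsProbabilityMeasure σ ∧ σ {z : ℂ | ‖z‖ = 1}ᶜ = 0 ∧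
        (∀ z : ℂ, σ {z} = 0) ∧
        Tendsto (fun k => ∫ z : ℂ, z ^ (n k) ∂σ) atTop (𝓝 1) := by
  have hpos := blockModulus_pos
  have hdvd := blockModulus_dvd_succ
  have hmeas : Measurable (circlePoint blockModulus) :=
    (continuous_circlePoint hpos three_mul_blockModulus_le_succ).measurable
  have := nullSingletonClass_digitMeasure_digitProb
  refine ⟨fun k => (blockSeq blockModulus k).2, strictMono_blockSeq_snd hpos,
    blockSeq_snd_pos hpos hdvd, tendsto_blockSeq_snd_succ_div hpos hdvd,
    (digitMeasure digitProb).map (circlePoint blockModulus),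
    Measure.isProbabilityMeasure_map hmeas.aemeasurable, ?_, ?_, ?_⟩
  · have hS : MeasurableSet {z : ℂ | ‖z‖ = 1} :=
      measurableSet_eq_fun measurable_norm measurable_const
    exact ae_iff.1 ((ae_map_iff hmeas.aemeasurable hS).2 (ae_of_all _ norm_circlePoint))
  · exact (nullSingletonClass_map hmeas (circlePoint_injective hpos three_mul_blockModulus_le_succ
      le_rfl)).measure_singleton
  · simp_rw [integral_map hmeas.aemeasurable (continuous_pow _).aestronglyMeasurable]
    rw [tendsto_iff_norm_sub_tendsto_zero]
    refine squeeze_zero (fun _ => norm_nonneg _)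
      norm_integral_circlePoint_pow_blockSeq_sub_one_le ?_
    exact tendsto_const_nhds.div_atTop (tendsto_atTop_add_const_right _ 2
      (tendsto_natCast_atTop_atTop.comp (tendsto_blockSeq_fst hpos hdvd)))
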